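/- Let n, m ≥ 0 be integers and let k be a natural number with k ≥ n + m and k − n − m even. Then g_k(n,m) = λ^{−k} · Σ_{l=0}^{(k−n−m)/2} α₁^{n+2l} · k! / ( l! · (n+l)! · ((k−n−2l−m)/2)! · ((k−n−2l+m)/2)! ). -/

import Mathlib

/-!
Expanding `(2 α₁ cos ξ₁ + 2 cos ξ₂)^k` binomially separates the variables, so by Fubini each term
is a product of two one-dimensional Fourier coefficients of powers of `2 cos ξ = e^{iξ} + e^{-iξ}`.
The `n`-th coefficient of `(2 cos ξ)^j` is `2π · C(j, (j+n)/2)` if `n ≤ j` and `j ≡ n (mod 2)`, and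
zero otherwise. Hence only `j = n + 2l` with `l ≤ q` survive, and
`C(k, n+2l) · C(n+2l, n+l) · C(m+2(q-l), m+q-l)` is the multinomial coefficient of the claim.
-/

open MeasureTheory

/-- The coefficients `g_k(n,m)` of the series expansion of the LGF. -/
noncomputable def g (α₁ : ℝ) (k : ℕ) (n m : ℤ) : ℂ :=
  (1 / (4 * Real.pi ^ 2) : ℂ) *
    ∫ ξ : ℝ × ℝ in Set.Icc (-Real.pi) Real.pi ×ˢ Set.Icc (-Real.pi) Real.pi,
      Complex.exp (-Complex.I * ((n : ℂ) * (ξ.1 : ℂ) + (m : ℂ) * (ξ.2 : ℂ))) *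
        (((2 * α₁ * Real.cos ξ.1 + 2 * Real.cos ξ.2) / (2 + 2 * α₁) : ℝ) : ℂ) ^ k

open Complex Finset
open scoped Real Nat

lemma integral_exp_I_mul_int_mul_Icc_neg_pi_pi (t : ℤ) :
    ∫ ξ in Set.Icc (-π) π, exp (I * t * ξ) = if t = 0 then ((2 * π : ℝ) : ℂ) else 0 := by
  rw [integral_Icc_eq_integral_Ioc, ← intervalIntegral.integral_of_le (by linarith [Real.pi_pos])]
  split_ifs with ht
  · simp only [ht, Int.cast_zero, mul_zero, zero_mul, exp_zero, intervalIntegral.integral_const,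
      real_smul, mul_one]
    push_cast
    ring
  · have hexp : ∀ s : ℤ, exp (I * t * ((s * π : ℝ) : ℂ)) = (-1) ^ (s * t) := fun s => by
      rw [zpow_mul, ← exp_pi_mul_I, ← exp_int_mul, ← exp_int_mul]
      push_cast
      ring_nf
    have h₁ := hexp 1
    have h₂ := hexp (-1)
    rw [integral_exp_mul_complex (by simpa [I_ne_zero] using ht)]
    push_cast at h₁ h₂ ⊢
    simp only [one_mul, neg_one_mul] at h₁ h₂
    rw [h₁, h₂, zpow_neg, ← inv_zpow, inv_neg, inv_one, sub_self, zero_div]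

/-- `2π` times this is the `n`-th Fourier coefficient of `(2 cos ξ)^j = (e^{iξ} + e^{-iξ})^j`:
the only binomial term `e^{i(2a-j)ξ}` that contributes is the one with `2a - j = n`. -/
def twoCosPowCoeff (j n : ℕ) : ℕ :=
  if n ≤ j ∧ (j + n) % 2 = 0 then j.choose ((j + n) / 2) else 0

lemma two_cos_pow_eq_sum_exp (j : ℕ) (ξ : ℝ) :
    ((2 * Real.cos ξ : ℝ) : ℂ) ^ j
      = ∑ a ∈ range (j + 1), (j.choose a : ℂ) * exp (I * ((2 * a - j : ℤ) : ℂ) * ξ) := by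
  have h2cos : ((2 * Real.cos ξ : ℝ) : ℂ) = exp (ξ * I) + exp (-ξ * I) := by
    push_cast
    rw [Complex.cos, mul_div_cancel₀ _ two_ne_zero]
  rw [h2cos, add_pow]
  refine sum_congr rfl fun a ha => ?_
  have haj : a ≤ j := Nat.lt_succ_iff.mp (mem_range.mp ha)
  rw [← exp_nat_mul, ← exp_nat_mul, ← exp_add, Nat.cast_sub haj]
  push_cast
  ring_nf

lemma integral_exp_mul_two_cos_pow (n j : ℕ) :
    ∫ ξ in Set.Icc (-π) π, exp (-I * n * ξ) * ((2 * Real.cos ξ : ℝ) : ℂ) ^ j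
      = ((2 * π : ℝ) : ℂ) * twoCosPowCoeff j n := by
  have hexpand : ∀ ξ : ℝ, exp (-I * n * ξ) * ((2 * Real.cos ξ : ℝ) : ℂ) ^ j
      = ∑ a ∈ range (j + 1), (j.choose a : ℂ) * exp (I * ((2 * a - j - n : ℤ) : ℂ) * ξ) := by
    intro ξ
    rw [two_cos_pow_eq_sum_exp, mul_sum]
    refine sum_congr rfl fun a _ => ?_
    rw [mul_left_comm, ← exp_add]
    push_cast
    ring_nf
  simp_rw [hexpand]
  rw [integral_finsetSum _ fun a _ => (by fun_prop : Continuous _).integrableOn_Icc]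
  simp_rw [integral_const_mul, integral_exp_I_mul_int_mul_Icc_neg_pi_pi]
  unfold twoCosPowCoeff
  split_ifs with h
  · rw [sum_eq_single ((j + n) / 2)]
    · rw [if_pos (by omega)]; push_cast; ring
    · intro a _ ha
      rw [if_neg (by omega), mul_zero]
    · intro hj
      exact absurd (mem_range.mpr (by omega)) hj
  · rw [Nat.cast_zero, mul_zero]
    refine sum_eq_zero fun a ha => ?_
    have := mem_range.mp ha
    rw [if_neg (by omega), mul_zero]

open Nat in
lemma choose_mul_choose_mul_choose_mul_factorial (i j i' j' : ℕ) :
    (i + j + (i' + j')).choose (i + j) * (i + j).choose i * (i' + j').choose i' *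
        (i ! * j ! * i' ! * j' !) = (i + j + (i' + j'))! := by
  calc _ = (i + j + (i' + j')).choose (i + j) * ((i + j).choose i * i ! * j !) *
        ((i' + j').choose i' * i' ! * j' !) := by ring
    _ = _ := by
      rw [choose_symm_add (a := i), choose_symm_add (a := i'), choose_symm_add (a := i + j),
        add_choose_mul_factorial_mul_factorial i, add_choose_mul_factorial_mul_factorial i',
        add_choose_mul_factorial_mul_factorial]

lemma twoCosPowCoeff_add_add (n l : ℕ) :
    twoCosPowCoeff (n + l + l) n = (n + l + l).choose (n + l) := by
  rw [twoCosPowCoeff, if_pos (by omega), show (n + l + l + n) / 2 = n + l by omega]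

lemma sum_choose_mul_twoCosPowCoeff (a : ℝ) (n m q : ℕ) :
    ∑ j ∈ range (n + m + 2 * q + 1), ((n + m + 2 * q).choose j : ℝ) * a ^ j *
        twoCosPowCoeff j n * twoCosPowCoeff (n + m + 2 * q - j) m
      = ∑ l ∈ range (q + 1), a ^ (n + 2 * l) * (n + m + 2 * q)! /
          (l ! * (n + l)! * (q - l)! * (q - l + m)!) := by
  set k := n + m + 2 * q
  set f : ℕ → ℝ := fun j => (k.choose j : ℝ) * a ^ j * twoCosPowCoeff j n * twoCosPowCoeff (k - j) m
  have hsub : (range (q + 1)).image (n + 2 * ·) ⊆ range (k + 1) := by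
    intro j hj
    obtain ⟨l, hl, rfl⟩ := mem_image.mp hj
    simp only [mem_range] at hl ⊢
    omega
  have hzero : ∀ j ∈ range (k + 1), j ∉ (range (q + 1)).image (n + 2 * ·) → f j = 0 := by
    intro j hj hj'
    simp only [f, twoCosPowCoeff]
    split_ifs with h₁ h₂
    · refine absurd (mem_image.mpr ⟨(j - n) / 2, ?_, by omega⟩) hj'
      simp only [mem_range] at hj ⊢
      omega
    all_goals simp
  have hterm : ∀ l ∈ range (q + 1), f (n + 2 * l) =
      a ^ (n + 2 * l) * k ! / (l ! * (n + l)! * (q - l)! * (q - l + m)!) := by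
    intro l hl
    obtain ⟨r, rfl⟩ : ∃ r, q = l + r := ⟨q - l, by have := mem_range.mp hl; omega⟩
    have hmult := choose_mul_choose_mul_choose_mul_factorial (n + l) l (m + r) r
    rw [show n + l + l + (m + r + r) = k by omega] at hmult
    simp only [f, show n + 2 * l = n + l + l by ring, show k - (n + l + l) = m + r + r by omega,
      twoCosPowCoeff_add_add, show l + r - l = r by omega, add_comm r m]
    rw [eq_div_iff (by positivity), ← hmult]
    push_cast
    ring
  calc ∑ j ∈ range (k + 1), f j = ∑ j ∈ (range (q + 1)).image (n + 2 * ·), f j :=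
        (sum_subset hsub hzero).symm
    _ = ∑ l ∈ range (q + 1), f (n + 2 * l) := sum_image fun x _ y _ h => by omega
    _ = _ := sum_congr rfl hterm

lemma integral_exp_mul_cos_add_cos_pow (a : ℝ) (n m k : ℕ) :
    ∫ ξ : ℝ × ℝ in Set.Icc (-π) π ×ˢ Set.Icc (-π) π,
        exp (-I * (n * ξ.1 + m * ξ.2)) * ((2 * a * Real.cos ξ.1 + 2 * Real.cos ξ.2 : ℝ) : ℂ) ^ k
      = ((4 * π ^ 2 * ∑ j ∈ range (k + 1),
          (k.choose j : ℝ) * a ^ j * twoCosPowCoeff j n * twoCosPowCoeff (k - j) m : ℝ) : ℂ) := by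
  have hexpand : ∀ ξ : ℝ × ℝ,
      exp (-I * (n * ξ.1 + m * ξ.2)) * ((2 * a * Real.cos ξ.1 + 2 * Real.cos ξ.2 : ℝ) : ℂ) ^ k
        = ∑ j ∈ range (k + 1), (k.choose j * a ^ j : ℂ) *
            ((exp (-I * n * ξ.1) * ((2 * Real.cos ξ.1 : ℝ) : ℂ) ^ j) *
              (exp (-I * m * ξ.2) * ((2 * Real.cos ξ.2 : ℝ) : ℂ) ^ (k - j))) := by
    intro ξ
    rw [show -I * (n * ξ.1 + m * ξ.2) = -I * n * ξ.1 + -I * m * ξ.2 by ring, exp_add]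
    push_cast
    rw [add_pow, mul_sum]
    refine sum_congr rfl fun j _ => ?_
    ring
  rw [Measure.volume_eq_prod]
  simp_rw [hexpand]
  rw [integral_finsetSum _ fun j _ => ContinuousOn.integrableOn_compact
    (isCompact_Icc.prod isCompact_Icc) (by fun_prop), ofReal_mul, ofReal_sum, mul_sum]
  refine sum_congr rfl fun j _ => ?_
  rw [integral_const_mul,
    setIntegral_prod_mul (fun x : ℝ => exp (-I * n * x) * ((2 * Real.cos x : ℝ) : ℂ) ^ j)
      (fun y : ℝ => exp (-I * m * y) * ((2 * Real.cos y : ℝ) : ℂ) ^ (k - j)),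
    integral_exp_mul_two_cos_pow, integral_exp_mul_two_cos_pow]
  push_cast
  ring

/-- `k = n + m + 2 * q` encodes `k ≥ n + m` with `k - n - m` even; then `(k-n-2l-m)/2 = q - l` and
`(k-n-2l+m)/2 = q - l + m`. -/
theorem stmt5_general (α₁ : ℝ) (n m k q : ℕ) (hk : k = n + m + 2 * q) :
    g α₁ k (n : ℤ) (m : ℤ) =
      ((((2 + 2 * α₁ : ℝ) ^ k)⁻¹ *
        ∑ l ∈ Finset.range (q + 1),
          α₁ ^ (n + 2 * l) * (Nat.factorial k : ℝ) /
            ((Nat.factorial l : ℝ) * (Nat.factorial (n + l) : ℝ) *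
              (Nat.factorial (q - l) : ℝ) * (Nat.factorial (q - l + m) : ℝ)) : ℝ) : ℂ) := by
  have hscale : ∀ x : ℝ,
      ((x / (2 + 2 * α₁) : ℝ) : ℂ) ^ k = (((2 + 2 * α₁) ^ k)⁻¹ : ℝ) * (x : ℂ) ^ k :=
    fun x => by push_cast; rw [div_pow, div_eq_inv_mul]
  simp only [g, Int.cast_natCast, hscale, mul_left_comm (exp _), integral_const_mul,
    integral_exp_mul_cos_add_cos_pow]
  rw [hk, sum_choose_mul_twoCosPowCoeff]
  generalize (∑ l ∈ range (q + 1), _ : ℝ) = S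
  have hπ : (π : ℂ) ≠ 0 := ofReal_ne_zero.mpr Real.pi_ne_zero
  push_cast
  field_simp

/-- Closed form of `g_k(n,m)` in terms of multinomial coefficients, for `n, m ≥ 0`,
`k ≥ n + m` and `k − n − m` even (written as `k = n + m + 2q`); the summation index
`l` runs from `0` to `q = (k−n−m)/2`, and `(k−n−2l−m)/2 = q − l`,
`(k−n−2l+m)/2 = q − l + m`. -/
theorem stmt5 (α₁ c : ℝ) (hα₀ : 0 < α₁) (hα₁ : α₁ ≤ 1) (hc : 0 < c)
    (n m k q : ℕ) (hk : k = n + m + 2 * q) :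
    g α₁ k (n : ℤ) (m : ℤ) =
      ((((2 + 2 * α₁ : ℝ) ^ k)⁻¹ *
        ∑ l ∈ Finset.range (q + 1),
          α₁ ^ (n + 2 * l) * (Nat.factorial k : ℝ) /
            ((Nat.factorial l : ℝ) * (Nat.factorial (n + l) : ℝ) *
              (Nat.factorial (q - l) : ℝ) * (Nat.factorial (q - l + m) : ℝ)) : ℝ) : ℂ) :=
  stmt5_general α₁ n m k q hk
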